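/- Error-vector bound in the sGS decomposition (second claim of Proposition 2.2). Let Y = Y_1 × … × Y_p and E = E_u* + E_d + E_u be as in the sGS setting, with E_d block diagonal positive definite, E_u strictly block upper triangular, and Ê := E + E_u E_d^{−1} E_u* (which is positive definite). Let ε ≥ 0 and let δ = (δ_1, …, δ_p) and δ̂ = (δ̂_1, …, δ̂_p) be elements of Y with δ_1 = δ̂_1 and ‖δ_i‖ ≤ ε, ‖δ̂_i‖ ≤ ε for all i = 1, …, p. Define d := δ̂ + E_u E_d^{−1}(δ̂ − δ). Then ‖Ê^{−1/2} d‖ ≤ ((2p − 1)‖E_d^{−1/2}‖ + p‖Ê^{−1/2}‖) ε, where ‖·‖ applied to an operator denotes the operator norm. -/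

import Mathlib

open RealInnerProductSpace

noncomputable section

variable {p : ℕ} [NeZero p] {Y : Fin p → Type*}
  [∀ i, NormedAddCommGroup (Y i)] [∀ i, InnerProductSpace ℝ (Y i)]
  [∀ i, FiniteDimensional ℝ (Y i)]

/-- The inclusion of the `j`-th factor into the product `Y = Y_1 × … × Y_p`. -/
def blockIncl (j : Fin p) : Y j →ₗ[ℝ] PiLp 2 Y :=
  (WithLp.linearEquiv 2 ℝ (∀ i, Y i)).symm.toLinearMap ∘ₗ LinearMap.single ℝ Y j

/-- The `(i,j)` block of a linear operator `E` on the product `Y = Y_1 × … × Y_p`. -/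
def blockOf (E : PiLp 2 Y →ₗ[ℝ] PiLp 2 Y) (i j : Fin p) : Y j →ₗ[ℝ] Y i :=
  PiLp.projₗ 2 Y i ∘ₗ E ∘ₗ blockIncl j

/-- The operator norm of a linear operator on the (finite-dimensional) product space. -/
def opNorm (M : PiLp 2 Y →ₗ[ℝ] PiLp 2 Y) : ℝ :=
  ‖LinearMap.toContinuousLinearMap M‖

set_option linter.unusedSectionVars false in
lemma sum_blockIncl' (x : PiLp 2 Y) : ∑ j, blockIncl (Y := Y) j (x j) = x := by
  refine PiLp.ext fun i => ?_
  calc (∑ j, blockIncl (Y := Y) j (x j)) i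
      = PiLp.projₗ (𝕜 := ℝ) 2 Y i (∑ j, blockIncl (Y := Y) j (x j)) := rfl
    _ = ∑ j, PiLp.projₗ (𝕜 := ℝ) 2 Y i (blockIncl (Y := Y) j (x j)) :=
        map_sum (PiLp.projₗ (𝕜 := ℝ) 2 Y i) _ Finset.univ
    _ = ∑ j, Pi.single j (x j) i := rfl
    _ = x i := by
        rw [Finset.sum_eq_single i]
        · exact Pi.single_eq_same i (x i)
        · intro b _ hb; exact Pi.single_eq_of_ne (Ne.symm hb) _
        · intro h; exact absurd (Finset.mem_univ i) h

set_option linter.unusedSectionVars false in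
lemma apply_eq_sum_blockOf' (M : PiLp 2 Y →ₗ[ℝ] PiLp 2 Y) (x : PiLp 2 Y) (i : Fin p) :
    M x i = ∑ j, blockOf M i j (x j) := by
  calc M x i = PiLp.projₗ (𝕜 := ℝ) 2 Y i (M x) := rfl
    _ = PiLp.projₗ (𝕜 := ℝ) 2 Y i (M (∑ j, blockIncl (Y := Y) j (x j))) := by
        rw [sum_blockIncl']
    _ = PiLp.projₗ (𝕜 := ℝ) 2 Y i (∑ j, M (blockIncl (Y := Y) j (x j))) := by rw [map_sum]
    _ = ∑ j, PiLp.projₗ (𝕜 := ℝ) 2 Y i (M (blockIncl (Y := Y) j (x j))) :=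
        map_sum (PiLp.projₗ (𝕜 := ℝ) 2 Y i) _ Finset.univ
    _ = ∑ j, blockOf M i j (x j) := rfl

set_option maxHeartbeats 2000000 in
/-- **Error-vector bound in the sGS decomposition (second claim of Proposition 2.2).**
Let `E = E_u* + E_d + E_u` be as in the sGS setting with `E_d` block diagonal positive
definite and `E_u` strictly block upper triangular, and `Ê := E + E_u E_d⁻¹ E_u*`.  Let
`ε ≥ 0` and `δ, δ̂ ∈ Y` with `δ_1 = δ̂_1`, `‖δ_i‖ ≤ ε`, `‖δ̂_i‖ ≤ ε` for all `i`.  Then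
`d := δ̂ + E_u E_d⁻¹(δ̂ − δ)` satisfies
`‖Ê^{−1/2} d‖ ≤ ((2p − 1)‖E_d^{−1/2}‖ + p‖Ê^{−1/2}‖) ε`. -/
theorem sGS_error_vector_bound
    (E Ed Eu : PiLp 2 Y →ₗ[ℝ] PiLp 2 Y)
    (hE_sym : LinearMap.IsSymmetric E)
    (hdecomp : E = LinearMap.adjoint Eu + Ed + Eu)
    (hEd_diag : ∀ i j : Fin p, i ≠ j → blockOf Ed i j = 0)
    (hEd_blk_sym : ∀ (i : Fin p) (u w : Y i), ⟪blockOf Ed i i u, w⟫ = ⟪u, blockOf Ed i i w⟫)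
    (hEd_blk_pd : ∀ (i : Fin p) (u : Y i), u ≠ 0 → 0 < ⟪u, blockOf Ed i i u⟫)
    (hEu_upper : ∀ i j : Fin p, j ≤ i → blockOf Eu i j = 0)
    (EdInv : PiLp 2 Y →ₗ[ℝ] PiLp 2 Y)
    (hEdInv₁ : Ed ∘ₗ EdInv = LinearMap.id) (hEdInv₂ : EdInv ∘ₗ Ed = LinearMap.id)
    -- `EdInvHalf` is `E_d^{−1/2}`: symmetric positive semidefinite with square `E_d⁻¹`
    (EdInvHalf : PiLp 2 Y →ₗ[ℝ] PiLp 2 Y)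
    (hEdih_sym : LinearMap.IsSymmetric EdInvHalf)
    (hEdih_psd : ∀ u, 0 ≤ ⟪u, EdInvHalf u⟫)
    (hEdih_sq : EdInvHalf ∘ₗ EdInvHalf = EdInv)
    -- `EhatInvHalf` is `Ê^{−1/2}`: symmetric positive semidefinite with
    -- `(Ê^{−1/2})² Ê = I`, where `Ê := E + E_u E_d⁻¹ E_u*`
    (EhatInvHalf : PiLp 2 Y →ₗ[ℝ] PiLp 2 Y)
    (hEhih_sym : LinearMap.IsSymmetric EhatInvHalf)
    (hEhih_psd : ∀ u, 0 ≤ ⟪u, EhatInvHalf u⟫)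
    (hEhih_sq : EhatInvHalf ∘ₗ EhatInvHalf ∘ₗ (E + Eu ∘ₗ EdInv ∘ₗ LinearMap.adjoint Eu) =
      LinearMap.id)
    (ε : ℝ) (hε : 0 ≤ ε)
    (δ δh : PiLp 2 Y) (hδ1 : δ 0 = δh 0)
    (hδ : ∀ i : Fin p, ‖δ i‖ ≤ ε) (hδh : ∀ i : Fin p, ‖δh i‖ ≤ ε)
    (d : PiLp 2 Y) (hd : d = δh + Eu (EdInv (δh - δ))) :
    ‖EhatInvHalf d‖ ≤ ((2 * (p : ℝ) - 1) * opNorm EdInvHalf + (p : ℝ) * opNorm EhatInvHalf) * ε := by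
  have hp1 : (1 : ℝ) ≤ (p : ℝ) := by
    exact_mod_cast Nat.one_le_iff_ne_zero.mpr (NeZero.ne p)
  -- Ed is block diagonal
  have hEd_apply : ∀ (x : PiLp 2 Y) (i : Fin p), Ed x i = blockOf Ed i i (x i) := by
    intro x i
    rw [apply_eq_sum_blockOf', Finset.sum_eq_single i]
    · intro b _ hb; rw [hEd_diag i b (Ne.symm hb)]; rfl
    · intro h; exact absurd (Finset.mem_univ i) h
  -- Ed is symmetric
  have hEd_sym : LinearMap.IsSymmetric Ed := by
    intro u w
    rw [PiLp.inner_apply, PiLp.inner_apply]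
    refine Finset.sum_congr rfl fun i _ => ?_
    rw [hEd_apply, hEd_apply]
    exact hEd_blk_sym i (u i) (w i)
  have hEd_adj : LinearMap.adjoint Ed = Ed :=
    LinearMap.isSelfAdjoint_iff'.mp ((LinearMap.isSymmetric_iff_isSelfAdjoint Ed).mp hEd_sym)
  have hH_adj : LinearMap.adjoint EhatInvHalf = EhatInvHalf :=
    LinearMap.isSelfAdjoint_iff'.mp
      ((LinearMap.isSymmetric_iff_isSelfAdjoint EhatInvHalf).mp hEhih_sym)
  -- EdInv is symmetric
  have hid_adj : LinearMap.adjoint (LinearMap.id : PiLp 2 Y →ₗ[ℝ] PiLp 2 Y)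
      = LinearMap.id := by
    symm
    rw [LinearMap.eq_adjoint_iff]
    intro x y
    rfl
  have hEdInv_adj : LinearMap.adjoint EdInv = EdInv := by
    have h1 : LinearMap.adjoint EdInv ∘ₗ Ed = LinearMap.id := by
      calc LinearMap.adjoint EdInv ∘ₗ Ed
          = LinearMap.adjoint EdInv ∘ₗ LinearMap.adjoint Ed := by rw [hEd_adj]
        _ = LinearMap.adjoint (Ed ∘ₗ EdInv) := (LinearMap.adjoint_comp Ed EdInv).symm
        _ = LinearMap.id := by rw [hEdInv₁, hid_adj]
    calc LinearMap.adjoint EdInv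
        = (LinearMap.adjoint EdInv ∘ₗ Ed) ∘ₗ EdInv := by
          rw [LinearMap.comp_assoc, hEdInv₁, LinearMap.comp_id]
      _ = EdInv := by rw [h1, LinearMap.id_comp]
  set T : PiLp 2 Y →ₗ[ℝ] PiLp 2 Y := Ed + Eu with hT
  set H : PiLp 2 Y →ₗ[ℝ] PiLp 2 Y := EhatInvHalf with hH
  set Ehat : PiLp 2 Y →ₗ[ℝ] PiLp 2 Y := E + Eu ∘ₗ EdInv ∘ₗ LinearMap.adjoint Eu with hEhat
  have hT_adj : LinearMap.adjoint T = Ed + LinearMap.adjoint Eu := by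
    rw [hT, map_add, hEd_adj]
  -- key factorization Ê = T EdInv T*
  have hhat : T ∘ₗ EdInv ∘ₗ LinearMap.adjoint T = Ehat := by
    rw [hT_adj, hEhat, hdecomp]
    simp only [LinearMap.comp_add, LinearMap.add_comp, ← LinearMap.comp_assoc, hEdInv₂,
      hEdInv₁, LinearMap.comp_id, LinearMap.id_comp, hT]
    abel
  -- Ê ∘ H² = id
  have hH2 : Ehat ∘ₗ (H ∘ₗ H) = LinearMap.id := by
    have hEhat_adj : LinearMap.adjoint Ehat = Ehat := by
      rw [← hhat]
      simp only [LinearMap.adjoint_comp, LinearMap.adjoint_adjoint, hEdInv_adj]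
      rw [LinearMap.comp_assoc]
    have h2 := congrArg LinearMap.adjoint hEhih_sq
    rwa [hid_adj, LinearMap.adjoint_comp, LinearMap.adjoint_comp,
      hEhat_adj, hH_adj, LinearMap.comp_assoc] at h2
  -- key estimate: ‖H (T (EdInv v))‖ ≤ ‖EdInvHalf v‖
  have key : ∀ v : PiLp 2 Y, ‖H (T (EdInv v))‖ ≤ ‖EdInvHalf v‖ := by
    intro v
    set a := H (T (EdInv v)) with ha
    by_cases h0 : a = 0
    · rw [h0, norm_zero]; exact norm_nonneg _
    set z := LinearMap.adjoint T (H a) with hz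
    have hEdInv_app : ∀ w : PiLp 2 Y, EdInvHalf (EdInvHalf w) = EdInv w :=
      fun w => LinearMap.congr_fun hEdih_sq w
    have hzn : ‖EdInvHalf z‖ ^ 2 = ‖a‖ ^ 2 := by
      rw [← real_inner_self_eq_norm_sq, ← real_inner_self_eq_norm_sq]
      calc ⟪EdInvHalf z, EdInvHalf z⟫
          = ⟪z, EdInvHalf (EdInvHalf z)⟫ := hEdih_sym z (EdInvHalf z)
        _ = ⟪z, EdInv z⟫ := by rw [hEdInv_app]
        _ = ⟪H a, T (EdInv z)⟫ := by rw [hz, LinearMap.adjoint_inner_left]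
        _ = ⟪H a, Ehat (H a)⟫ := by
            rw [← hhat]; rfl
        _ = ⟪H a, T (EdInv v)⟫ := by
            rw [ha]
            congr 1
            exact LinearMap.congr_fun hH2 (T (EdInv v))
        _ = ⟪a, H (T (EdInv v))⟫ := hEhih_sym a (T (EdInv v))
        _ = ⟪a, a⟫ := by rw [← ha]
    have hzn' : ‖EdInvHalf z‖ = ‖a‖ := by
      have := hzn
      nlinarith [norm_nonneg (EdInvHalf z), norm_nonneg a]
    have hcs : ‖a‖ ^ 2 ≤ ‖EdInvHalf v‖ * ‖a‖ := by
      have : ⟪a, a⟫ = ⟪EdInvHalf v, EdInvHalf z⟫ := by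
        calc ⟪a, a⟫ = ⟪H (T (EdInv v)), a⟫ := by rw [← ha]
          _ = ⟪T (EdInv v), H a⟫ := hEhih_sym (T (EdInv v)) a
          _ = ⟪EdInv v, z⟫ := by rw [hz, LinearMap.adjoint_inner_right]
          _ = ⟪EdInvHalf (EdInvHalf v), z⟫ := by rw [hEdInv_app]
          _ = ⟪EdInvHalf v, EdInvHalf z⟫ := by
              rw [← hEdih_sym (EdInvHalf v) z]
      rw [← real_inner_self_eq_norm_sq, this, ← hzn']
      exact real_inner_le_norm _ _
    have hanorm : 0 < ‖a‖ := norm_pos_iff.mpr h0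
    nlinarith [hcs]
  -- decomposition of d
  have hdT : d = δ + T (EdInv (δh - δ)) := by
    rw [hd]
    have h1 : Ed (EdInv (δh - δ)) = δh - δ := LinearMap.congr_fun hEdInv₁ (δh - δ)
    rw [hT, LinearMap.add_apply, h1]
    abel
  -- norm of δ
  have hnδ : ‖δ‖ ≤ (p : ℝ) * ε := by
    have hpε : 0 ≤ (p : ℝ) * ε := by positivity
    have h2 : ‖δ‖ ^ 2 ≤ ((p : ℝ) * ε) ^ 2 := by
      rw [PiLp.norm_sq_eq_of_L2]
      calc ∑ i, ‖δ i‖ ^ 2 ≤ ∑ _i : Fin p, ε ^ 2 :=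
            Finset.sum_le_sum fun i _ => pow_le_pow_left₀ (norm_nonneg _) (hδ i) 2
        _ = (p : ℝ) * ε ^ 2 := by
            simp [Finset.sum_const, Finset.card_univ, nsmul_eq_mul]
        _ ≤ ((p : ℝ) * ε) ^ 2 := by nlinarith [sq_nonneg ε]
    have := pow_le_pow_iff_left₀ (norm_nonneg δ) hpε (two_ne_zero)
    exact this.mp h2
  -- norm of δh - δ
  have hnv : ‖δh - δ‖ ≤ (2 * (p : ℝ) - 1) * ε := by
    have hc : 0 ≤ (2 * (p : ℝ) - 1) * ε := by nlinarith
    have h2 : ‖δh - δ‖ ^ 2 ≤ ((2 * (p : ℝ) - 1) * ε) ^ 2 := by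
      rw [PiLp.norm_sq_eq_of_L2]
      have hv0 : ‖(δh - δ) 0‖ ^ 2 = 0 := by
        rw [PiLp.sub_apply, ← hδ1, sub_self, norm_zero]; ring
      calc ∑ i, ‖(δh - δ) i‖ ^ 2
          = ∑ i ∈ Finset.univ.erase (0 : Fin p), ‖(δh - δ) i‖ ^ 2 :=
            (Finset.sum_erase (f := fun i : Fin p => ‖(δh - δ) i‖ ^ 2) Finset.univ hv0).symm
        _ ≤ ∑ _i ∈ Finset.univ.erase (0 : Fin p), (2 * ε) ^ 2 := by
            refine Finset.sum_le_sum fun i _ => pow_le_pow_left₀ (norm_nonneg _) ?_ 2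
            rw [PiLp.sub_apply]
            calc ‖δh i - δ i‖ ≤ ‖δh i‖ + ‖δ i‖ := norm_sub_le _ _
              _ ≤ 2 * ε := by linarith [hδ i, hδh i]
        _ = ((p : ℝ) - 1) * (2 * ε) ^ 2 := by
            rw [Finset.sum_const, Finset.card_erase_of_mem (Finset.mem_univ (0 : Fin p)),
              Finset.card_univ, Fintype.card_fin, nsmul_eq_mul]
            have : ((p - 1 : ℕ) : ℝ) = (p : ℝ) - 1 := by
              rw [Nat.cast_sub (Nat.one_le_iff_ne_zero.mpr (NeZero.ne p))]; norm_num
            rw [this]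
        _ ≤ ((2 * (p : ℝ) - 1) * ε) ^ 2 := by nlinarith [sq_nonneg ε, sq_nonneg ((p:ℝ) - 1)]
    exact (pow_le_pow_iff_left₀ (norm_nonneg _) hc two_ne_zero).mp h2
  -- operator norm bound
  have hop : ∀ (M : PiLp 2 Y →ₗ[ℝ] PiLp 2 Y) (x : PiLp 2 Y), ‖M x‖ ≤ opNorm M * ‖x‖ :=
    fun M x => (LinearMap.toContinuousLinearMap M).le_opNorm x
  have hopn : ∀ M : PiLp 2 Y →ₗ[ℝ] PiLp 2 Y, 0 ≤ opNorm M := fun M => norm_nonneg (LinearMap.toContinuousLinearMap M)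
  calc ‖EhatInvHalf d‖
      = ‖H δ + H (T (EdInv (δh - δ)))‖ := by rw [hdT, map_add]
    _ ≤ ‖H δ‖ + ‖H (T (EdInv (δh - δ)))‖ := norm_add_le _ _
    _ ≤ opNorm EhatInvHalf * ‖δ‖ + ‖EdInvHalf (δh - δ)‖ := add_le_add (hop _ _) (key _)
    _ ≤ opNorm EhatInvHalf * ((p : ℝ) * ε) + opNorm EdInvHalf * ((2 * (p : ℝ) - 1) * ε) := by
        refine add_le_add (mul_le_mul_of_nonneg_left hnδ (hopn _)) ?_
        exact le_trans (hop _ _) (mul_le_mul_of_nonneg_left hnv (hopn _))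
    _ = ((2 * (p : ℝ) - 1) * opNorm EdInvHalf + (p : ℝ) * opNorm EhatInvHalf) * ε := by ring
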